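/- arXiv:math-ph/0110035 — 5 statements merged into one kernel-verified Lean document; each statement's English description precedes it below -/
import Mathlib

section
/- Let H be a complex Hilbert space of dimension at least 2 (possibly infinite) and let (S(U), ρ_V^U) be a complete presheaf of sets on L(H) such that S(U) is nonempty for every U ∈ L(H). Then for every U ∈ L(H) with U ≠ 0, the set S(U) has exactly one element. -/
/-- The lattice `L(H)` of closed subspaces of the Hilbert space `H`,
ordered by inclusion. -/
abbrev ClosedSub (H : Type*) [NormedAddCommGroup H] [InnerProductSpace ℂ H] : Type _ :=
  {U : Submodule ℂ H // IsClosed (U : Set H)}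

variable {H : Type*} [NormedAddCommGroup H] [InnerProductSpace ℂ H]

instance : Bot (ClosedSub H) :=
  ⟨⟨⊥, by rw [Submodule.bot_coe]; exact isClosed_singleton⟩⟩

/-- The meet of two closed subspaces is their intersection. -/
instance : Min (ClosedSub H) := ⟨fun U V => ⟨U.1 ⊓ V.1, U.2.inter V.2⟩⟩

/-- The join of a family of closed subspaces: the closed linear span of their union. -/
noncomputable def ClosedSub.famSup {ι : Type} (a : ι → ClosedSub H) : ClosedSub H :=
  ⟨(⨆ i, (a i).1).topologicalClosure, Submodule.isClosed_topologicalClosure _⟩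

theorem ClosedSub.le_famSup {ι : Type} (a : ι → ClosedSub H) (i : ι) :
    a i ≤ ClosedSub.famSup a := by
  change (a i).1 ≤ (⨆ i, (a i).1).topologicalClosure
  exact le_trans (le_iSup (fun i => (a i).1) i) (Submodule.le_topologicalClosure _)

theorem ClosedSub.inf_le_left' (U V : ClosedSub H) : U ⊓ V ≤ U := by
  change U.1 ⊓ V.1 ≤ U.1; exact inf_le_left

theorem ClosedSub.inf_le_right' (U V : ClosedSub H) : U ⊓ V ≤ V := by
  change U.1 ⊓ V.1 ≤ V.1; exact inf_le_right

/-!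
If closed subspaces `V`, `W`, `X` meet pairwise in `0` and `X ≤ V ⊔ W`, then `S X` has at most
one element: a section `x` over `X`, glued with fixed sections over `V` and `W`, gives a section
over `V ⊔ W ⊔ X = V ⊔ W`, which is already determined by its restrictions to `V` and `W`, and
restricting it back to `X` recovers `x`.

Such triples come from two families `u`, `v` with `⟪u i, v j⟫ = 0` and equal Gram matrices: take
the closed spans of `u`, `u + v` and `u - v` (the last two are orthogonal). A line `ℂ x` finds its
partner in a unit vector orthogonal to `x`, which exists because `dim H ≥ 2`. A closed subspace
with an infinite Hilbert basis is the disjoint join of the closed spans of two halves of the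
basis, each the partner of the other; one with a finite basis is the disjoint join of finitely
many lines. Finally, by uniqueness of gluing, `S` is a subsingleton on a disjoint join of
subspaces on which it is a subsingleton.
-/

open Function Set
open scoped InnerProductSpace

theorem Submodule.IsOrtho.topologicalClosure {𝕜 E : Type*} [RCLike 𝕜] [NormedAddCommGroup E]
    [InnerProductSpace 𝕜 E] {K L : Submodule 𝕜 E} (h : K ⟂ L) :
    K.topologicalClosure ⟂ L.topologicalClosure := by
  rw [Submodule.isOrtho_iff_le, Submodule.orthogonal_closure]
  exact Submodule.topologicalClosure_minimal _ h.le (Submodule.isClosed_orthogonal _)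

theorem Submodule.disjoint_of_isOrtho_of_le_topologicalClosure {𝕜 E : Type*} [RCLike 𝕜]
    [NormedAddCommGroup E] [InnerProductSpace 𝕜 E] {X Y X' Y' : Submodule 𝕜 E}
    (hX : X' ⟂ X) (hY : Y' ⟂ Y) (h : X ≤ (X' ⊔ Y').topologicalClosure) : Disjoint X Y := by
  set K := (X' ⊔ Y').topologicalClosure
  have hperp : X ⊓ Y ≤ Kᗮ := by
    rw [Submodule.orthogonal_closure, ← Submodule.inf_orthogonal]
    exact inf_le_inf hX.ge hY.ge
  exact disjoint_iff_inf_le.2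
    ((le_inf (inf_le_left.trans h) hperp).trans K.inf_orthogonal_eq_bot.le)

theorem exists_norm_eq_one_inner_eq_zero {𝕜 E : Type*} [RCLike 𝕜] [NormedAddCommGroup E]
    [InnerProductSpace 𝕜 E] (hdim : 2 ≤ Module.rank 𝕜 E) (x : E) :
    ∃ y : E, ‖y‖ = 1 ∧ ⟪x, y⟫_𝕜 = 0 := by
  have hperp : (𝕜 ∙ x)ᗮ ≠ ⊥ := by
    rw [Ne, Submodule.orthogonal_eq_bot_iff]
    intro htop
    rw [← rank_top, ← htop] at hdim
    have := hdim.trans ((rank_span_le _).trans_eq (Cardinal.mk_singleton x))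
    norm_num at this
  obtain ⟨z, hz, hz0⟩ := Submodule.exists_mem_ne_zero_of_ne_bot hperp
  refine ⟨(‖z‖⁻¹ : 𝕜) • z, norm_smul_inv_norm hz0, ?_⟩
  rw [inner_smul_right, Submodule.mem_orthogonal_singleton_iff_inner_right.1 hz, mul_zero]

namespace ClosedSub

def span (s : Set H) : ClosedSub H :=
  ⟨(Submodule.span ℂ s).topologicalClosure, Submodule.isClosed_topologicalClosure _⟩

theorem span_le_span {s t : Set H} (h : s ⊆ Submodule.span ℂ t) : span s ≤ span t :=
  Submodule.topologicalClosure_mono (Submodule.span_le.2 h)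

theorem famSup_span {ι : Type} (s : ι → Set H) :
    famSup (fun i => span (s i)) = span (⋃ i, s i) := by
  refine Subtype.ext (le_antisymm ?_ (Submodule.topologicalClosure_mono ?_))
  · refine Submodule.topologicalClosure_minimal _ (iSup_le fun i => ?_)
      (Submodule.isClosed_topologicalClosure _)
    exact Submodule.topologicalClosure_mono (Submodule.span_mono (subset_iUnion s i))
  · rw [Submodule.span_iUnion]
    exact iSup_mono fun i => Submodule.le_topologicalClosure _

theorem famSup_cond_span (s t : Set H) :
    famSup (fun b => cond b (span s) (span t)) = span (s ∪ t) := by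
  rw [union_eq_iUnion, ← famSup_span]
  congr with (_ | _) <;> rfl

theorem pairwise_disjoint_cond {P Q : ClosedSub H} (h : Disjoint P.1 Q.1) :
    Pairwise (Disjoint on fun b => (cond b P Q).1) := by
  rintro (_ | _) (_ | _) hbc
  exacts [absurd rfl hbc, h.symm, h, absurd rfl hbc]

theorem disjoint_span_of_inner_eq_zero {s t : Set H}
    (h : ∀ x ∈ s, ∀ y ∈ t, ⟪x, y⟫_ℂ = 0) :
    Disjoint (span s).1 (span t).1 :=
  (Submodule.isOrtho_span.2 h).topologicalClosure.disjoint

theorem span_range_hilbertBasis {ι : Type*} (U : ClosedSub H) (b : HilbertBasis ι ℂ U.1) :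
    span (range fun i => (b i : H)) = U := by
  refine Subtype.ext (le_antisymm ?_ fun x hx => ?_)
  · exact Submodule.topologicalClosure_minimal _
      (Submodule.span_le.2 (range_subset_iff.2 fun i => (b i).2)) U.2
  · have hdense : (⟨x, hx⟩ : U.1) ∈ closure (Submodule.span ℂ (range b) : Set U.1) := by
      rw [← Submodule.topologicalClosure_coe, b.dense_span]
      trivial
    have := image_closure_subset_closure_image continuous_subtype_val ⟨_, hdense, rfl⟩
    rwa [← Submodule.coe_subtype, ← Submodule.map_coe, Submodule.map_span, ← range_comp,
      ← Submodule.topologicalClosure_coe] at this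

section GramPair

variable {ι : Type*} {u v : ι → H}

theorem isOrtho_span_range_add_sub (hcross : ∀ i j, ⟪u i, v j⟫_ℂ = 0)
    (hgram : ∀ i j, ⟪u i, u j⟫_ℂ = ⟪v i, v j⟫_ℂ) :
    Submodule.span ℂ (range (u + v)) ⟂ Submodule.span ℂ (range (u - v)) := by
  rw [Submodule.isOrtho_span]
  rintro _ ⟨i, rfl⟩ _ ⟨j, rfl⟩
  simp only [Pi.add_apply, Pi.sub_apply, inner_add_left, inner_sub_right, hcross, hgram,
    ← inner_conj_symm (v i) (u j), map_zero]
  ring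

theorem disjoint_span_range_span_range_add (hcross : ∀ i j, ⟪u i, v j⟫_ℂ = 0)
    (hgram : ∀ i j, ⟪u i, u j⟫_ℂ = ⟪v i, v j⟫_ℂ) :
    Disjoint (span (range u)).1 (span (range (u + v))).1 := by
  refine Submodule.disjoint_of_isOrtho_of_le_topologicalClosure
    (X' := Submodule.span ℂ (range v))
    ((Submodule.isOrtho_span.2 ?_).topologicalClosure.mono_left
      (Submodule.le_topologicalClosure _))
    ((isOrtho_span_range_add_sub hcross hgram).symm.topologicalClosure.mono_left
      (Submodule.le_topologicalClosure _))
    (Submodule.topologicalClosure_mono (Submodule.span_le.2 ?_))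
  · rintro _ ⟨i, rfl⟩ _ ⟨j, rfl⟩
    rw [inner_eq_zero_symm]
    exact hcross j i
  · rintro _ ⟨i, rfl⟩
    have : u i = v i + (u - v) i := by simp
    rw [SetLike.mem_coe, this]
    exact Submodule.add_mem_sup (Submodule.subset_span ⟨i, rfl⟩)
      (Submodule.subset_span ⟨i, rfl⟩)

theorem disjoint_span_range_span_range_sub (hcross : ∀ i j, ⟪u i, v j⟫_ℂ = 0)
    (hgram : ∀ i j, ⟪u i, u j⟫_ℂ = ⟪v i, v j⟫_ℂ) :
    Disjoint (span (range u)).1 (span (range (u - v))).1 := by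
  simpa [sub_eq_add_neg] using disjoint_span_range_span_range_add (v := -v)
    (by simpa using hcross) (by simpa using hgram)

theorem span_range_le_span_range_add_union_sub :
    span (range u) ≤ span (range (u + v) ∪ range (u - v)) := by
  refine span_le_span (range_subset_iff.2 fun i => ?_)
  have : u i = (2 : ℂ)⁻¹ • ((u + v) i + (u - v) i) := by
    simp only [Pi.add_apply, Pi.sub_apply]
    module
  rw [SetLike.mem_coe, this]
  exact Submodule.smul_mem _ _ (Submodule.add_mem _
    (Submodule.subset_span (Or.inl ⟨i, rfl⟩)) (Submodule.subset_span (Or.inr ⟨i, rfl⟩)))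

end GramPair

theorem famSup_option_elim {ι : Type} (a : ι → ClosedSub H) {X : ClosedSub H}
    (hX : X ≤ famSup a) : famSup (fun o : Option ι => o.elim X a) = famSup a := by
  refine Subtype.ext (le_antisymm ?_ (Submodule.topologicalClosure_mono ?_))
  · refine Submodule.topologicalClosure_minimal _ ?_ (Submodule.isClosed_topologicalClosure _)
    rw [iSup_option]
    exact sup_le hX (Submodule.le_topologicalClosure _)
  · exact iSup_le fun i => le_iSup (fun o => (o.elim X a).1) (some i)

def GluesUniquely (S : ClosedSub H → Type*)
    (ρ : ∀ {U V : ClosedSub H}, V ≤ U → S U → S V) : Prop :=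
  ∀ {ι : Type} (a : ι → ClosedSub H) (f : ∀ i, S (a i)),
    (∀ i j : ι, a i ⊓ a j ≠ ⊥ →
      ρ (inf_le_left' (a i) (a j)) (f i) = ρ (inf_le_right' (a i) (a j)) (f j)) →
    ∃! g : S (famSup a), ∀ i, ρ (le_famSup a i) g = f i

namespace GluesUniquely

variable {S : ClosedSub H → Type*} {ρ : ∀ {U V : ClosedSub H}, V ≤ U → S U → S V}

section Cover

variable {ι : Type} {a : ι → ClosedSub H}

theorem existsUnique_of_pairwise_disjoint (hglue : GluesUniquely S ρ)
    (ha : Pairwise (Disjoint on fun i => (a i).1)) (f : ∀ i, S (a i)) :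
    ∃! g : S (famSup a), ∀ i, ρ (le_famSup a i) g = f i :=
  hglue a f fun i j hij => by
    obtain rfl | hne := eq_or_ne i j
    · rfl
    · exact absurd (Subtype.ext (disjoint_iff.1 (ha hne))) hij

theorem ext (hglue : GluesUniquely S ρ) (ha : Pairwise (Disjoint on fun i => (a i).1))
    {U : ClosedSub H} (hU : famSup a = U) (hle : ∀ i, a i ≤ U) {s t : S U}
    (h : ∀ i, ρ (hle i) s = ρ (hle i) t) : s = t := by
  subst hU
  exact (hglue.existsUnique_of_pairwise_disjoint ha fun i => ρ (le_famSup a i) t).unique h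
    fun _ => rfl

theorem subsingleton (hglue : GluesUniquely S ρ) (ha : Pairwise (Disjoint on fun i => (a i).1))
    {U : ClosedSub H} (hU : famSup a = U) [∀ i, Subsingleton (S (a i))] : Subsingleton (S U) :=
  ⟨fun _ _ =>
    hglue.ext ha hU (fun i => (le_famSup a i).trans hU.le) fun _ => Subsingleton.elim _ _⟩

theorem subsingleton_of_le_famSup (hglue : GluesUniquely S ρ) (hne : ∀ U, Nonempty (S U))
    (ha : Pairwise (Disjoint on fun i => (a i).1)) {X : ClosedSub H}
    (hXa : ∀ i, Disjoint X.1 (a i).1) (hX : X ≤ famSup a) : Subsingleton (S X) := by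
  let b : Option ι → ClosedSub H := fun o => o.elim X a
  have hb : Pairwise (Disjoint on fun o => (b o).1) := by
    rintro (_ | i) (_ | j) hij
    · exact absurd rfl hij
    · exact hXa j
    · exact (hXa i).symm
    · exact ha (Option.some_injective _ |>.ne_iff.1 hij)
  let extend (x : S X) : ∀ o, S (b o) := fun o => Option.rec x (fun i => (hne (a i)).some) o
  refine ⟨fun x y => ?_⟩
  obtain ⟨gx, hgx, -⟩ := hglue.existsUnique_of_pairwise_disjoint hb (extend x)
  obtain ⟨gy, hgy, -⟩ := hglue.existsUnique_of_pairwise_disjoint hb (extend y)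
  have : gx = gy :=
    hglue.ext ha (famSup_option_elim a hX).symm (fun i => le_famSup b (some i)) fun i =>
      (hgx (some i)).trans (hgy (some i)).symm
  subst this
  exact (hgx none).symm.trans (hgy none)

end Cover

theorem subsingleton_span_range (hglue : GluesUniquely S ρ) (hne : ∀ U, Nonempty (S U))
    {ι : Type*} {u v : ι → H} (hcross : ∀ i j, ⟪u i, v j⟫_ℂ = 0)
    (hgram : ∀ i j, ⟪u i, u j⟫_ℂ = ⟪v i, v j⟫_ℂ) :
    Subsingleton (S (span (range u))) := by
  refine hglue.subsingleton_of_le_famSup hne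
    (a := fun b => cond b (span (range (u + v))) (span (range (u - v))))
    (pairwise_disjoint_cond ?_) (Bool.forall_bool.2 ⟨?_, ?_⟩) ?_
  · exact (isOrtho_span_range_add_sub hcross hgram).topologicalClosure.disjoint
  · exact disjoint_span_range_span_range_sub hcross hgram
  · exact disjoint_span_range_span_range_add hcross hgram
  · rw [famSup_cond_span]
    exact span_range_le_span_range_add_union_sub

theorem subsingleton_span_singleton (hglue : GluesUniquely S ρ) (hne : ∀ U, Nonempty (S U))
    (hdim : 2 ≤ Module.rank ℂ H) {x : H} (hx : ‖x‖ = 1) : Subsingleton (S (span {x})) := by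
  obtain ⟨y, hy, hxy⟩ := exists_norm_eq_one_inner_eq_zero hdim x
  have := hglue.subsingleton_span_range hne (u := fun _ : Unit => x) (v := fun _ => y)
    (fun _ _ => hxy) fun _ _ => by
      rw [inner_self_eq_norm_sq_to_K, inner_self_eq_norm_sq_to_K, hx, hy]
  rwa [range_const] at this

theorem subsingleton_span_range_of_finite (hglue : GluesUniquely S ρ)
    (hne : ∀ U, Nonempty (S U)) (hdim : 2 ≤ Module.rank ℂ H) {ι : Type*} [Finite ι]
    {v : ι → H} (hv : Orthonormal ℂ v) : Subsingleton (S (span (range v))) := by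
  let e := (Finite.equivFin ι).symm
  have (k : Fin (Nat.card ι)) : Subsingleton (S (span {v (e k)})) :=
    hglue.subsingleton_span_singleton hne hdim (hv.1 _)
  refine hglue.subsingleton (a := fun k => span {v (e k)})
    (fun k l hkl => disjoint_span_of_inner_eq_zero ?_) ?_
  · rintro _ rfl _ rfl
    exact hv.2 (e.injective.ne hkl)
  · rw [famSup_span, iUnion_singleton_eq_range]
    exact congrArg span (e.surjective.range_comp v)

theorem subsingleton_span_range_sum (hglue : GluesUniquely S ρ) (hne : ∀ U, Nonempty (S U))
    {κ : Type*} {v : κ ⊕ κ → H} (hv : Orthonormal ℂ v) :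
    Subsingleton (S (span (range v))) := by
  have hinl {w : κ ⊕ κ → H} (hw : Orthonormal ℂ w) :
      Subsingleton (S (span (range (w ∘ Sum.inl)))) :=
    hglue.subsingleton_span_range hne (v := w ∘ Sum.inr) (fun _ _ => hw.2 Sum.inl_ne_inr)
      fun _ _ => by classical simp [orthonormal_iff_ite.1 hw]
  let a (b : Bool) := cond b (span (range (v ∘ Sum.inl))) (span (range (v ∘ Sum.inr)))
  have : ∀ b, Subsingleton (S (a b)) :=
    Bool.forall_bool.2
      ⟨hinl (w := v ∘ Sum.swap) (hv.comp _ Sum.swap_leftInverse.injective), hinl hv⟩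
  refine hglue.subsingleton (a := a)
    (pairwise_disjoint_cond (disjoint_span_of_inner_eq_zero ?_)) ?_
  · rintro _ ⟨i, rfl⟩ _ ⟨j, rfl⟩
    exact hv.2 Sum.inl_ne_inr
  · rw [famSup_cond_span, ← Sum.range_eq]

theorem subsingleton_span_range_of_infinite (hglue : GluesUniquely S ρ)
    (hne : ∀ U, Nonempty (S U)) {ι : Type*} [Infinite ι] {v : ι → H}
    (hv : Orthonormal ℂ v) :
    Subsingleton (S (span (range v))) := by
  obtain ⟨e⟩ : Nonempty (ι ⊕ ι ≃ ι) :=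
    Cardinal.eq.1 (by simp [Cardinal.add_eq_self (Cardinal.infinite_iff.1 ‹_›)])
  simpa [e.surjective.range_comp] using
    hglue.subsingleton_span_range_sum hne (hv.comp e e.injective)

theorem subsingleton_of_two_le_rank [CompleteSpace H] (hglue : GluesUniquely S ρ)
    (hne : ∀ U, Nonempty (S U)) (hdim : 2 ≤ Module.rank ℂ H) (U : ClosedSub H) :
    Subsingleton (S U) := by
  have : CompleteSpace U.1 := U.2.completeSpace_coe
  obtain ⟨ι, b, -⟩ := exists_hilbertBasis ℂ U.1
  have hv : Orthonormal ℂ fun i => (b i : H) :=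
    b.orthonormal.comp_linearIsometry U.1.subtypeₗᵢ
  rw [← span_range_hilbertBasis U b]
  -- Gluing families are indexed by `Type`, not by the universe of `H`: an infinite basis is
  -- therefore split into two halves rather than into lines.
  rcases finite_or_infinite ι with _ | _
  · exact hglue.subsingleton_span_range_of_finite hne hdim hv
  · exact hglue.subsingleton_span_range_of_infinite hne hv

end GluesUniquely

end ClosedSub

theorem complete_presheaf_on_quantum_lattice_trivial_general
    {H : Type*} [NormedAddCommGroup H] [InnerProductSpace ℂ H] [CompleteSpace H]
    (hdim : 2 ≤ Module.rank ℂ H)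
    -- a presheaf of sets on `L(H)`:
    (S : ClosedSub H → Type*)
    (ρ : ∀ {U V : ClosedSub H}, V ≤ U → S U → S V)
    -- completeness: compatible local data glue uniquely:
    (hglue : ∀ {ι : Type} (a : ι → ClosedSub H) (f : ∀ i, S (a i)),
      (∀ i j : ι, a i ⊓ a j ≠ ⊥ →
        ρ (ClosedSub.inf_le_left' (a i) (a j)) (f i) =
          ρ (ClosedSub.inf_le_right' (a i) (a j)) (f j)) →
      ∃! g : S (ClosedSub.famSup a), ∀ i, ρ (ClosedSub.le_famSup a i) g = f i)
    -- every `S(U)` is nonempty: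
    (hne : ∀ U : ClosedSub H, Nonempty (S U)) :
    ∀ U : ClosedSub H, U ≠ ⊥ → ∃ f : S U, ∀ g : S U, g = f := by
  intro U _
  have := ClosedSub.GluesUniquely.subsingleton_of_two_le_rank (@hglue) hne hdim U
  obtain ⟨f⟩ := hne U
  exact ⟨f, fun g => Subsingleton.elim g f⟩

/-- A complete presheaf of sets on the quantum lattice `L(H)` of a complex Hilbert
space of dimension at least `2`, all of whose sets are nonempty, is trivial:
`S(U)` has exactly one element for every `U ≠ 0`. -/
theorem complete_presheaf_on_quantum_lattice_trivial
    {H : Type*} [NormedAddCommGroup H] [InnerProductSpace ℂ H] [CompleteSpace H]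
    (hdim : 2 ≤ Module.rank ℂ H)
    -- a presheaf of sets on `L(H)`:
    (S : ClosedSub H → Type*)
    (ρ : ∀ {U V : ClosedSub H}, V ≤ U → S U → S V)
    (hid : ∀ (U : ClosedSub H) (f : S U), ρ (le_refl U) f = f)
    (hcomp : ∀ {U V W : ClosedSub H} (hWV : W ≤ V) (hVU : V ≤ U) (f : S U),
      ρ hWV (ρ hVU f) = ρ (hWV.trans hVU) f)
    -- completeness: compatible local data glue uniquely:
    (hglue : ∀ {ι : Type} (a : ι → ClosedSub H) (f : ∀ i, S (a i)),
      (∀ i j : ι, a i ⊓ a j ≠ ⊥ →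
        ρ (ClosedSub.inf_le_left' (a i) (a j)) (f i) =
          ρ (ClosedSub.inf_le_right' (a i) (a j)) (f j)) →
      ∃! g : S (ClosedSub.famSup a), ∀ i, ρ (ClosedSub.le_famSup a i) g = f i)
    -- every `S(U)` is nonempty:
    (hne : ∀ U : ClosedSub H, Nonempty (S U)) :
    ∀ U : ClosedSub H, U ≠ ⊥ → ∃ f : S U, ∀ g : S U, g = f :=
  complete_presheaf_on_quantum_lattice_trivial_general hdim S ρ hglue hne
end

section
/- Let M be a regular Hausdorff (T3) topological space. A nonempty subset 𝔭 ⊆ T(M) is a point in the lattice T(M) if and only if there exists x ∈ M such that 𝔭 = {U ∈ T(M) : x ∈ U}; moreover such x is uniquely determined by 𝔭. -/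
open TopologicalSpace

/-- A point in the lattice `T(M)` of open subsets of a topological space `M`:
a set of open sets not containing `∅`, closed under binary intersection,
upward closed, and such that whenever the union of a family of open sets belongs
to it, so does at least one member of the family. -/
def IsLatticePoint {M : Type*} [TopologicalSpace M] (𝔭 : Set (Opens M)) : Prop :=
  (⊥ : Opens M) ∉ 𝔭 ∧
  (∀ U ∈ 𝔭, ∀ V ∈ 𝔭, U ⊓ V ∈ 𝔭) ∧
  (∀ U ∈ 𝔭, ∀ W : Opens M, U ≤ W → W ∈ 𝔭) ∧
  (∀ A : Set (Opens M), sSup A ∈ 𝔭 → ∃ U ∈ A, U ∈ 𝔭)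

/-- In a regular Hausdorff space `M`, a nonempty subset of `T(M)` is a point of the
lattice `T(M)` iff it is the set of open neighbourhoods of some `x ∈ M`, and this
`x` is uniquely determined. -/
theorem isLatticePoint_iff_open_nhds_of_point
    {M : Type*} [TopologicalSpace M] [T3Space M]
    (𝔭 : Set (Opens M)) (h𝔭 : 𝔭.Nonempty) :
    (IsLatticePoint 𝔭 ↔ ∃ x : M, 𝔭 = {U : Opens M | x ∈ U}) ∧
      (∀ x y : M, 𝔭 = {U : Opens M | x ∈ U} → 𝔭 = {U : Opens M | y ∈ U} → x = y) := by
  constructor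
  · constructor
    · rintro ⟨hbot, hinf, hup, hprime⟩
      -- top is in 𝔭
      obtain ⟨U₁, hU₁⟩ := h𝔭
      have htop : (⊤ : Opens M) ∈ 𝔭 := hup U₁ hU₁ ⊤ le_top
      -- the largest open set not in 𝔭
      set U₀ : Opens M := sSup {U : Opens M | U ∉ 𝔭} with hU₀def
      have hU₀ : U₀ ∉ 𝔭 := by
        intro h
        obtain ⟨U, hU, hU'⟩ := hprime _ h
        exact hU hU'
      have key : ∀ V : Opens M, V ∈ 𝔭 ↔ ¬ V ≤ U₀ := by
        intro V
        constructor
        · intro hV hle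
          exact hU₀ (hup V hV U₀ hle)
        · intro h
          by_contra hV
          exact h (le_sSup hV)
      -- the closed complement
      set C : Set M := (U₀ : Set M)ᶜ with hCdef
      have hmeet : ∀ V : Opens M, V ∈ 𝔭 ↔ (C ∩ (V : Set M)).Nonempty := by
        intro V
        rw [key V]
        constructor
        · intro h
          obtain ⟨a, ha, ha'⟩ := Set.not_subset.mp h
          exact ⟨a, ha', ha⟩
        · rintro ⟨a, ha, ha'⟩ hle
          exact ha (hle ha')
      have hCcl : IsClosed C := U₀.isOpen.isClosed_compl
      have hCirr : IsIrreducible C := by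
        constructor
        · obtain ⟨a, ha, -⟩ := (hmeet ⊤).mp htop
          exact ⟨a, ha⟩
        · intro u v hu hv h1 h2
          have hu' : (⟨u, hu⟩ : Opens M) ∈ 𝔭 := (hmeet _).mpr h1
          have hv' : (⟨v, hv⟩ : Opens M) ∈ 𝔭 := (hmeet _).mpr h2
          exact (hmeet _).mp (hinf _ hu' _ hv')
      obtain ⟨x, hx⟩ := QuasiSober.sober hCirr hCcl
      refine ⟨x, Set.ext fun U => ?_⟩
      simp only [Set.mem_setOf_eq]
      constructor
      · intro hU
        obtain ⟨a, ha, ha'⟩ := (hmeet U).mp hU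
        rw [← hx] at ha
        -- a ∈ closure {x}, a ∈ U open ⇒ x ∈ U
        obtain ⟨b, hb, hb'⟩ := mem_closure_iff.mp ha U U.isOpen ha'
        rwa [Set.mem_singleton_iff.mp hb'] at hb
      · intro hxU
        rw [hmeet U]
        have hxC : x ∈ C := by
          rw [← hx]; exact subset_closure rfl
        exact ⟨x, hxC, hxU⟩
    · rintro ⟨x, rfl⟩
      refine ⟨?_, ?_, ?_, ?_⟩
      · intro h; exact h
      · intro U hU V hV; exact ⟨hU, hV⟩
      · intro U hU W hW; exact hW hU
      · intro A hA
        obtain ⟨U, hU, hxU⟩ := by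
          simpa [Opens.mem_sSup] using hA
        exact ⟨U, hU, hxU⟩
  · intro x y hx hy
    by_contra hne
    have h1 : x ∈ ({y}ᶜ : Set M) := hne
    have hU : (⟨{y}ᶜ, isOpen_compl_singleton⟩ : Opens M) ∈ 𝔭 := by
      rw [hx]; exact h1
    rw [hy] at hU
    exact hU rfl
end

section
/- Let M be a locally compact Hausdorff space and let 𝔅 be a quasipoint of the lattice T(M) of open subsets of M. Then at least one of the following holds: (i) M ∖ K ∈ 𝔅 for every compact subset K ⊆ M; (ii) there exists a unique x ∈ M such that ⋂_{U ∈ 𝔅} closure(U) = {x}. -/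
open TopologicalSpace

/-- A filter base in a lattice `L` with least element `⊥`. -/
def IsFilterBase {L : Type*} [Lattice L] [OrderBot L] (B : Set L) : Prop :=
  B.Nonempty ∧ (⊥ : L) ∉ B ∧ ∀ a ∈ B, ∀ b ∈ B, ∃ c ∈ B, c ≤ a ∧ c ≤ b

/-- A quasipoint of `L`: a maximal filter base. -/
def IsQuasipoint {L : Type*} [Lattice L] [OrderBot L] (B : Set L) : Prop :=
  IsFilterBase B ∧ ∀ C : Set L, IsFilterBase C → B ⊆ C → C = B

/-- If an open set meets every member of a quasipoint nontrivially, it belongs to it. -/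
lemma mem_quasipoint_of_meets {M : Type*} [TopologicalSpace M]
    {𝔅 : Set (Opens M)} (h𝔅 : IsQuasipoint 𝔅) (V : Opens M)
    (hV : ∀ U ∈ 𝔅, V ⊓ U ≠ ⊥) : V ∈ 𝔅 := by
  obtain ⟨⟨hne, hbot, hdir⟩, hmax⟩ := h𝔅
  set C : Set (Opens M) := 𝔅 ∪ {V} ∪ ((V ⊓ ·) '' 𝔅) with hC
  have hsub : 𝔅 ⊆ C := fun U hU => Or.inl (Or.inl hU)
  have hCfb : IsFilterBase C := by
    refine ⟨hne.mono hsub, ?_, ?_⟩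
    · rintro ((h | h) | ⟨U, hU, h⟩)
      · exact hbot h
      · obtain ⟨U, hU⟩ := hne
        have hVb : V = ⊥ := (Set.mem_singleton_iff.mp h).symm
        exact hV U hU (by rw [hVb, bot_inf_eq])
      · exact hV U hU h
    · -- directedness
      have key : ∀ a ∈ C, ∃ c ∈ 𝔅, V ⊓ c ≤ a := by
        rintro a ((ha | ha) | ⟨U, hU, rfl⟩)
        · exact ⟨a, ha, inf_le_right⟩
        · obtain ⟨U, hU⟩ := hne
          exact ⟨U, hU, Set.mem_singleton_iff.mp ha ▸ inf_le_left⟩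
        · exact ⟨U, hU, le_refl _⟩
      rintro a ha b hb
      obtain ⟨ca, hca, hca'⟩ := key a ha
      obtain ⟨cb, hcb, hcb'⟩ := key b hb
      obtain ⟨c, hc, hc1, hc2⟩ := hdir ca hca cb hcb
      refine ⟨V ⊓ c, Or.inr ⟨c, hc, rfl⟩, ?_, ?_⟩
      · exact le_trans (inf_le_inf_left V hc1) hca'
      · exact le_trans (inf_le_inf_left V hc2) hcb'
  have := hmax C hCfb hsub
  rw [← this]
  exact Or.inl (Or.inr rfl)

/-- A quasipoint of the lattice of open subsets of a locally compact Hausdorff space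
is either unbounded (contains the complement of every compact set) or bounded over
a unique point `x` (the closures of its members intersect exactly in `{x}`). -/
theorem quasipoint_unbounded_or_over_unique_point
    {M : Type*} [TopologicalSpace M] [LocallyCompactSpace M] [T2Space M]
    {𝔅 : Set (Opens M)} (h𝔅 : IsQuasipoint 𝔅) :
    (∀ K : Set M, ∀ hK : IsCompact K,
        (⟨Kᶜ, hK.isClosed.isOpen_compl⟩ : Opens M) ∈ 𝔅) ∨
      (∃! x : M, (⋂ U ∈ 𝔅, closure (U : Set M)) = {x}) := by
  by_cases h : ∀ K : Set M, ∀ hK : IsCompact K,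
      (⟨Kᶜ, hK.isClosed.isOpen_compl⟩ : Opens M) ∈ 𝔅
  · exact Or.inl h
  · right
    push_neg at h
    obtain ⟨K, hK, hKc⟩ := h
    obtain ⟨⟨hne, hbot, hdir⟩, hmax⟩ := h𝔅
    -- Kᶜ does not meet some U₀ ∈ 𝔅
    have : ∃ U₀ ∈ 𝔅, (⟨Kᶜ, hK.isClosed.isOpen_compl⟩ : Opens M) ⊓ U₀ = ⊥ := by
      by_contra hcon
      push_neg at hcon
      exact hKc (mem_quasipoint_of_meets ⟨⟨hne, hbot, hdir⟩, hmax⟩ _ hcon)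
    obtain ⟨U₀, hU₀, hU₀K⟩ := this
    have hU₀sub : (U₀ : Set M) ⊆ K := by
      intro x hx
      by_contra hxK
      have : x ∈ ((⟨Kᶜ, hK.isClosed.isOpen_compl⟩ : Opens M) ⊓ U₀ : Opens M) := ⟨hxK, hx⟩
      rw [hU₀K] at this
      exact this
    -- nonempty intersection of closures
    have hne𝔅 : Nonempty 𝔅 := hne.to_subtype
    set t : 𝔅 → Set M := fun U => closure ((U : Opens M) ⊓ U₀ : Opens M) with ht
    have hmem_ne : ∀ U ∈ 𝔅, ((U : Opens M) : Set M).Nonempty := by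
      intro U hU
      rcases Set.eq_empty_or_nonempty (U : Set M) with he | h
      · exact absurd (Opens.ext (he.trans Opens.coe_bot.symm) ▸ hU) hbot
      · exact h
    have htne : ∀ U : 𝔅, (t U).Nonempty := by
      rintro ⟨U, hU⟩
      obtain ⟨c, hc, hc1, hc2⟩ := hdir U hU U₀ hU₀
      obtain ⟨x, hx⟩ := hmem_ne c hc
      exact ⟨x, subset_closure ⟨hc1 hx, hc2 hx⟩⟩
    have htcl : ∀ U : 𝔅, IsClosed (t U) := fun U => isClosed_closure
    have htcomp : ∀ U : 𝔅, IsCompact (t U) := by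
      intro U
      exact hK.of_isClosed_subset isClosed_closure
        (closure_minimal (fun x hx => hU₀sub hx.2) hK.isClosed)
    have htdir : Directed (· ⊇ ·) t := by
      rintro ⟨U, hU⟩ ⟨V, hV⟩
      obtain ⟨c, hc, hc1, hc2⟩ := hdir U hU V hV
      refine ⟨⟨c, hc⟩, ?_, ?_⟩ <;>
        exact closure_mono (fun x hx => ⟨by exact (by first | exact hc1 hx.1 | exact hc2 hx.1), hx.2⟩)
    have hnonempty : (⋂ U : 𝔅, t U).Nonempty :=
      IsCompact.nonempty_iInter_of_directed_nonempty_isCompact_isClosed t htdir htne htcomp htcl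
    obtain ⟨x, hx⟩ := hnonempty
    have hxmem : x ∈ ⋂ U ∈ 𝔅, closure (U : Set M) := by
      rw [Set.mem_iInter₂]
      intro U hU
      have := Set.mem_iInter.mp hx ⟨U, hU⟩
      exact closure_mono (fun y hy => hy.1) this
    -- uniqueness of points in the intersection
    have huniq : ∀ y ∈ ⋂ U ∈ 𝔅, closure (U : Set M), y = x := by
      intro y hy
      by_contra hxy
      obtain ⟨V, W, hVo, hWo, hyV, hxW, hVW⟩ := t2_separation hxy
      have hmeet : ∀ z : M, z ∈ ⋂ U ∈ 𝔅, closure (U : Set M) → ∀ (A : Set M) (hA : IsOpen A),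
          z ∈ A → ∀ U ∈ 𝔅, (⟨A, hA⟩ : Opens M) ⊓ U ≠ ⊥ := by
        intro z hz A hA hzA U hU hbot'
        have hzc : z ∈ closure (U : Set M) := Set.mem_iInter₂.mp hz U hU
        obtain ⟨w, hwA, hwU⟩ := (mem_closure_iff.mp hzc) A hA hzA
        have : w ∈ ((⟨A, hA⟩ : Opens M) ⊓ U : Opens M) := ⟨hwA, hwU⟩
        rw [hbot'] at this
        exact this
      have hVmem : (⟨V, hVo⟩ : Opens M) ∈ 𝔅 :=
        mem_quasipoint_of_meets ⟨⟨hne, hbot, hdir⟩, hmax⟩ _ (hmeet y hy V hVo hyV)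
      have hWmem : (⟨W, hWo⟩ : Opens M) ∈ 𝔅 :=
        mem_quasipoint_of_meets ⟨⟨hne, hbot, hdir⟩, hmax⟩ _ (hmeet x hxmem W hWo hxW)
      obtain ⟨c, hc, hc1, hc2⟩ := hdir _ hVmem _ hWmem
      obtain ⟨z, hz⟩ := hmem_ne c hc
      exact hVW.ne_of_mem (hc1 hz) (hc2 hz) rfl
    refine ⟨x, ?_, ?_⟩
    · ext y
      simp only [Set.mem_singleton_iff]
      exact ⟨fun hy => huniq y hy, fun hy => hy ▸ hxmem⟩
    · intro z hz
      have : x ∈ ({z} : Set M) := hz ▸ hxmem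
      exact (Set.mem_singleton_iff.mp this).symm
end

section
/- Let M and N be regular Hausdorff (T3) topological spaces and let Φ : T(N) → T(M) be a map between their lattices of open sets such that Φ(∅) = ∅, Φ(N) = M, Φ(V ∩ W) = Φ(V) ∩ Φ(W) for all open V, W ⊆ N, and Φ(⋃_{i∈I} V_i) = ⋃_{i∈I} Φ(V_i) for every family (V_i)_{i∈I} of open subsets of N. Then there exists a unique continuous map f : M → N such that Φ(V) = f⁻¹(V) for every open V ⊆ N. -/
open TopologicalSpace

/-- Every continuous lattice homomorphism `Φ : T(N) → T(M)` (preserving `∅`, the whole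
space, binary intersections and arbitrary unions) is induced by a unique continuous
map `f : M → N` via `Φ(V) = f⁻¹(V)`. -/
theorem continuous_lattice_hom_induced_by_unique_continuous_map
    {M N : Type*} [TopologicalSpace M] [TopologicalSpace N] [T3Space M] [T3Space N]
    (Φ : Opens N → Opens M)
    (hbot : Φ ⊥ = ⊥)
    (htop : Φ ⊤ = ⊤)
    (hinf : ∀ V W : Opens N, Φ (V ⊓ W) = Φ V ⊓ Φ W)
    (hsup : ∀ A : Set (Opens N), Φ (sSup A) = sSup (Φ '' A)) :
    ∃! f : C(M, N), ∀ V : Opens N, (Φ V : Set M) = f ⁻¹' (V : Set N) := by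
  classical
  have hmono : Monotone Φ := by
    intro V W hVW
    have h := hsup {V, W}
    rw [Set.image_pair, sSup_pair, sSup_pair, sup_eq_right.mpr hVW] at h
    exact h ▸ le_sup_left
  have key : ∀ x : M, ∃ y : N, ∀ V : Opens N, x ∈ Φ V ↔ y ∈ V := by
    intro x
    set U : Opens N := sSup {V | x ∉ Φ V} with hUdef
    have hxU : x ∉ Φ U := by
      rw [hUdef, hsup]
      intro h
      obtain ⟨W, ⟨V, hV, rfl⟩, hxW⟩ := Opens.mem_sSup.mp h
      exact hV hxW
    have hmem : ∀ V : Opens N, x ∈ Φ V ↔ ¬ V ≤ U := by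
      intro V
      constructor
      · intro h hVU
        exact hxU (hmono hVU h)
      · intro h
        by_contra hx
        exact h (le_sSup hx)
    have hne : ∀ V : Opens N, ¬ V ≤ U ↔ ((U : Set N)ᶜ ∩ (V : Set N)).Nonempty := by
      intro V
      rw [Set.inter_comm]
      constructor
      · intro h
        rcases Set.not_subset.mp (fun hs => h (SetLike.coe_subset_coe.mp hs)) with ⟨y, hy1, hy2⟩
        exact ⟨y, hy1, hy2⟩
      · rintro ⟨y, hy1, hy2⟩ hle
        exact hy2 (hle hy1)
    have hCne : ((U : Set N)ᶜ).Nonempty := by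
      rw [Set.nonempty_compl]
      intro hU
      have : U = ⊤ := SetLike.coe_injective (by simp [hU])
      exact hxU (this ▸ htop ▸ trivial)
    have hirr : IsIrreducible ((U : Set N)ᶜ) := by
      refine ⟨hCne, ?_⟩
      intro u v hu hv h1 h2
      have h1' : x ∈ Φ ⟨u, hu⟩ := (hmem _).mpr ((hne ⟨u, hu⟩).mpr h1)
      have h2' : x ∈ Φ ⟨v, hv⟩ := (hmem _).mpr ((hne ⟨v, hv⟩).mpr h2)
      have h3 : x ∈ Φ (⟨u, hu⟩ ⊓ ⟨v, hv⟩) := by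
        rw [hinf]; exact ⟨h1', h2'⟩
      exact (hne _).mp ((hmem _).mp h3)
    obtain ⟨y, hy⟩ := QuasiSober.sober hirr U.isOpen.isClosed_compl
    refine ⟨y, fun V => ?_⟩
    rw [hmem, hne]
    constructor
    · rintro ⟨z, hz1, hz2⟩
      rw [← hy] at hz1
      have hc : ((V : Set N) ∩ {y}).Nonempty := by
        rw [← closure_nonempty_iff]
        exact ⟨z, V.isOpen.inter_closure ⟨hz2, hz1⟩⟩
      obtain ⟨w, hw1, hw2⟩ := hc
      rw [Set.mem_singleton_iff] at hw2
      subst hw2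
      exact hw1
    · intro hyV
      exact ⟨y, hy ▸ subset_closure rfl, hyV⟩
  choose f0 hf0 using key
  have hpre : ∀ V : Opens N, (Φ V : Set M) = f0 ⁻¹' (V : Set N) := by
    intro V
    ext x
    exact hf0 x V
  have hcont : Continuous f0 := by
    rw [continuous_def]
    intro s hs
    rw [show s = ((⟨s, hs⟩ : Opens N) : Set N) from rfl, ← hpre]
    exact (Φ ⟨s, hs⟩).isOpen
  refine ⟨⟨f0, hcont⟩, hpre, ?_⟩
  intro g hg
  ext x
  by_contra hne
  obtain ⟨u, v, hu, hv, hgu, hfv, huv⟩ := t2_separation hne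
  have h1 : x ∈ Φ ⟨u, hu⟩ := by
    have : x ∈ (Φ ⟨u, hu⟩ : Set M) := by rw [hg]; exact hgu
    exact this
  have h2 : x ∈ Φ ⟨v, hv⟩ := (hf0 x ⟨v, hv⟩).mpr hfv
  have h3 : x ∈ Φ (⟨u, hu⟩ ⊓ ⟨v, hv⟩) := by rw [hinf]; exact ⟨h1, h2⟩
  have : (⟨u, hu⟩ ⊓ ⟨v, hv⟩ : Opens N) = ⊥ := by
    apply SetLike.coe_injective
    simpa [Set.disjoint_iff_inter_eq_empty] using huv
  rw [this, hbot] at h3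
  exact h3
end

section
/- Let M be a topological space and σ a spectral family in T(M). Then Spec(σ) = closure(f_σ(D(σ))), i.e., the spectrum of σ equals the closure in ℝ of the image of the function induced by σ on its admissible domain. -/
open TopologicalSpace

variable {M : Type*} [TopologicalSpace M]

/-- A spectral family in the lattice `T(M)` of open subsets of `M`. -/
def IsSpectralFamilyT (σ : ℝ → Opens M) : Prop :=
  (∀ l m : ℝ, l ≤ m → σ l ≤ σ m) ∧
  (∀ l : ℝ, (σ l : Set M) = interior (⋂ m ∈ Set.Ioi l, (σ m : Set M))) ∧
  interior (⋂ l : ℝ, (σ l : Set M)) = ∅ ∧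
  (⋃ l : ℝ, (σ l : Set M)) = Set.univ

/-- The admissible domain of a spectral family in `T(M)`. -/
def admDomain (σ : ℝ → Opens M) : Set M := {x : M | ∃ l : ℝ, x ∉ σ l}

/-- The function induced by a spectral family in `T(M)`. -/
noncomputable def specFunT (σ : ℝ → Opens M) (x : M) : ℝ := sInf {l : ℝ | x ∈ σ l}

/-- The resolvent set of a spectral family: points near which it is locally constant. -/
def specResolvent (σ : ℝ → Opens M) : Set ℝ :=
  {l : ℝ | ∃ U ∈ nhds l, ∀ m ∈ U, σ m = σ l}

/-- The spectrum of a spectral family. -/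
def spectrumT (σ : ℝ → Opens M) : Set ℝ := (specResolvent σ)ᶜ

/-! Every value `f_σ(x)` is a jump of `σ`: `x` lies in `σ μ` for `μ > f_σ(x)` but in no `σ m` with
`m < f_σ(x)`, so the image of `f_σ` lies in the closed set `Spec(σ)`. Conversely, if a gap `(a, b]`
misses the image, every point of `σ b` has value at most `a` and so lies in all `σ m` with `m > a`;
right continuity `σ a = int ⋂_{m > a} σ m` then gives `σ b ⊆ σ a`. Hence `σ` is locally constant
off the closure of the image. -/

open Set Filter Topology
open scoped Interval

variable {σ : ℝ → Opens M}

theorem mem_specResolvent_iff {l : ℝ} : l ∈ specResolvent σ ↔ ∀ᶠ m in 𝓝 l, σ m = σ l :=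
  eventually_iff_exists_mem.symm

theorem isOpen_specResolvent (σ : ℝ → Opens M) : IsOpen (specResolvent σ) := by
  refine isOpen_iff_eventually.2 fun l hl => ?_
  rw [mem_specResolvent_iff] at hl
  filter_upwards [hl.eventually_nhds, hl] with m hnear hm
  rw [mem_specResolvent_iff]
  filter_upwards [hnear] with k hk
  rw [hk, hm]

theorem isClosed_spectrumT (σ : ℝ → Opens M) : IsClosed (spectrumT σ) :=
  (isOpen_specResolvent σ).isClosed_compl

section Monotone

variable (hmono : Monotone σ)
include hmono

theorem specFunT_le_of_mem {x : M} (hx : x ∈ admDomain σ) {b : ℝ} (hb : x ∈ σ b) :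
    specFunT σ x ≤ b := by
  obtain ⟨l₀, hl₀⟩ := hx
  refine csInf_le ⟨l₀, fun m hm => ?_⟩ hb
  by_contra! hlt
  exact hl₀ (hmono hlt.le hm)

theorem notMem_of_lt_specFunT {x : M} (hx : x ∈ admDomain σ) {m : ℝ} (hm : m < specFunT σ x) :
    x ∉ σ m :=
  fun h => (specFunT_le_of_mem hmono hx h).not_gt hm

theorem mem_of_specFunT_lt {x : M} (hx : ∃ l, x ∈ σ l) {m : ℝ} (hm : specFunT σ x < m) :
    x ∈ σ m := by
  obtain ⟨l, hl, hlm⟩ := exists_lt_of_csInf_lt hx hm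
  exact hmono hlm.le hl

end Monotone

namespace IsSpectralFamilyT

variable (hσ : IsSpectralFamilyT σ)
include hσ

theorem monotone : Monotone σ := hσ.1

theorem exists_mem (x : M) : ∃ l, x ∈ σ l :=
  mem_iUnion.1 (hσ.2.2.2.symm ▸ mem_univ x)

theorem specFunT_mem_spectrumT {x : M} (hx : x ∈ admDomain σ) :
    specFunT σ x ∈ spectrumT σ := by
  set l := specFunT σ x
  intro hl
  rw [mem_specResolvent_iff] at hl
  obtain ⟨m, hml, hm⟩ :=
    (eventually_mem_nhdsWithin.and (hl.filter_mono nhdsWithin_le_nhds) : ∀ᶠ m in 𝓝[<] l, _).exists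
  obtain ⟨μ, hlμ, hμ⟩ :=
    (eventually_mem_nhdsWithin.and (hl.filter_mono nhdsWithin_le_nhds) : ∀ᶠ m in 𝓝[>] l, _).exists
  have hxμ : x ∈ σ μ := mem_of_specFunT_lt hσ.monotone (hσ.exists_mem x) hlμ
  rw [hμ, ← hm] at hxμ
  exact notMem_of_lt_specFunT hσ.monotone hx hml hxμ

theorem le_of_disjoint_Ioc {a b : ℝ}
    (hab : Disjoint (Ioc a b) (specFunT σ '' admDomain σ)) : σ b ≤ σ a := by
  have hsub : (σ b : Set M) ⊆ ⋂ m ∈ Ioi a, (σ m : Set M) := by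
    refine fun x hxb => mem_iInter₂.2 fun m (ham : a < m) => ?_
    by_contra hxm
    have hx : x ∈ admDomain σ := ⟨m, hxm⟩
    have hfa : specFunT σ x ≤ a := by
      by_contra! haf
      exact hab.notMem_of_mem_left ⟨haf, specFunT_le_of_mem hσ.monotone hx hxb⟩
        (mem_image_of_mem _ hx)
    exact hxm (mem_of_specFunT_lt hσ.monotone ⟨b, hxb⟩ (hfa.trans_lt ham))
  change (σ b : Set M) ⊆ σ a
  rw [hσ.2.1 a]
  exact interior_maximal hsub (σ b).isOpen

theorem eq_of_disjoint_uIoc {a b : ℝ}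
    (hab : Disjoint (Ι a b) (specFunT σ '' admDomain σ)) : σ a = σ b := by
  rcases le_total a b with h | h
  · rw [uIoc_of_le h] at hab
    exact le_antisymm (hσ.monotone h) (hσ.le_of_disjoint_Ioc hab)
  · rw [uIoc_of_ge h] at hab
    exact le_antisymm (hσ.le_of_disjoint_Ioc hab) (hσ.monotone h)

theorem compl_closure_image_subset_specResolvent :
    (closure (specFunT σ '' admDomain σ))ᶜ ⊆ specResolvent σ := by
  intro l hl
  obtain ⟨ε, hε, hball⟩ := Metric.mem_nhds_iff.1 (isClosed_closure.isOpen_compl.mem_nhds hl)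
  refine ⟨Metric.ball l ε, Metric.ball_mem_nhds l hε, fun m hm => (hσ.eq_of_disjoint_uIoc ?_).symm⟩
  have hconn : Ι l m ⊆ Metric.ball l ε := uIoc_subset_uIcc.trans
    ((Real.ball_eq_Ioo l ε ▸ ordConnected_Ioo).uIcc_subset (Metric.mem_ball_self hε) hm)
  exact subset_compl_iff_disjoint_right.1
    (hconn.trans (hball.trans (compl_subset_compl.2 subset_closure)))

end IsSpectralFamilyT

/-- The spectrum of a spectral family in `T(M)` is the closure of the image of the
induced function on the admissible domain. -/
theorem spectrumT_eq_closure_image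
    {M : Type*} [TopologicalSpace M] {σ : ℝ → Opens M} (hσ : IsSpectralFamilyT σ) :
    spectrumT σ = closure (specFunT σ '' admDomain σ) := by
  refine Subset.antisymm ?_ ?_
  · exact compl_subset_comm.1 hσ.compl_closure_image_subset_specResolvent
  · exact closure_minimal (image_subset_iff.2 fun _ => hσ.specFunT_mem_spectrumT)
      (isClosed_spectrumT σ)
end
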